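/- arXiv:1507.00989 — 2 statements merged into one kernel-verified Lean document; each statement's English description precedes it below -/
import Mathlib

section
/- If f is a distal homeomorphism of a compact metric space X, then every shadowable point of f lies in X^deg, the set of points at which X is totally disconnected. -/
open Metric Set

/-- Natural iterates of a homeomorphism. -/
def hnpow {X : Type*} [TopologicalSpace X] (f : X ≃ₜ X) : ℕ → X ≃ₜ X
  | 0 => Homeomorph.refl X
  | n+1 => (hnpow f n).trans f

/-- Integer iterates `fⁿ`, `n ∈ ℤ`, of a homeomorphism. -/
def hpow {X : Type*} [TopologicalSpace X] (f : X ≃ₜ X) : ℤ → X ≃ₜ X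
  | Int.ofNat n => hnpow f n
  | Int.negSucc n => hnpow f.symm (n+1)

variable {X : Type*} [MetricSpace X]

/-- `ξ` is a `δ`-pseudo-orbit of `f`. -/
def IsPseudoOrbit (f : X ≃ₜ X) (δ : ℝ) (ξ : ℤ → X) : Prop :=
  ∀ n : ℤ, dist (f (ξ n)) (ξ (n+1)) ≤ δ

/-- `ξ` is `ε`-shadowed by the orbit of `y`. -/
def ShadowedBy (f : X ≃ₜ X) (ε : ℝ) (y : X) (ξ : ℤ → X) : Prop :=
  ∀ n : ℤ, dist (hpow f n y) (ξ n) ≤ ε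

/-- `x` is a shadowable point of `f`. -/
def ShadowablePoint (f : X ≃ₜ X) (x : X) : Prop :=
  ∀ ε > 0, ∃ δ > 0, ∀ ξ : ℤ → X, IsPseudoOrbit f δ ξ → ξ 0 = x →
    ∃ y, ShadowedBy f ε y ξ

/-- `f` has the pseudo-orbit tracing property. -/
def POTP (f : X ≃ₜ X) : Prop :=
  ∀ ε > 0, ∃ δ > 0, ∀ ξ : ℤ → X, IsPseudoOrbit f δ ξ → ∃ y, ShadowedBy f ε y ξ

/-- `x` is a nonwandering point of `f`. -/
def NonWandering (f : X ≃ₜ X) (x : X) : Prop :=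
  ∀ U ∈ nhds x, ∃ k : ℕ, 0 < k ∧ ((hpow f (k : ℤ)) '' U ∩ U).Nonempty

/-- `x` is a chain recurrent point of `f`. -/
def ChainRecurrent (f : X ≃ₜ X) (x : X) : Prop :=
  ∀ ρ > 0, ∃ n : ℕ, 0 < n ∧ ∃ c : ℕ → X, c 0 = x ∧ c n = x ∧
    ∀ i < n, dist (f (c i)) (c (i+1)) ≤ ρ

/-- `f` is distal: `inf_{n∈ℤ} d(fⁿ x, fⁿ y) > 0` for all distinct `x, y`. -/
def Distal (f : X ≃ₜ X) : Prop :=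
  ∀ x y : X, x ≠ y → ∃ c > 0, ∀ n : ℤ, c ≤ dist (hpow f n x) (hpow f n y)

/-- `f` is minimal: every full orbit is dense. -/
def MinimalHomeo (f : X ≃ₜ X) : Prop :=
  ∀ x : X, Dense (Set.range fun n : ℤ => hpow f n x)

/-- `f` is equicontinuous (uniformly, over all integer iterates). -/
def EquicontinuousHomeo (f : X ≃ₜ X) : Prop :=
  ∀ α > 0, ∃ β > 0, ∀ x y : X, dist x y ≤ β → ∀ n : ℤ, dist (hpow f n x) (hpow f n y) ≤ α

/-! A shadowing orbit of a pseudo-orbit that starts at `x` and ends on the orbit of `y` is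
close to `x` at time `0` and eventually close to the orbit of `y`. For a distal map every pair
of points returns simultaneously near itself (Ellis: the idempotents of the enveloping semigroup
of `f × f` are trivial), so eventual closeness of two orbits forces closeness of the points, and
`x`, `y` lie within `2ε`; taking `3ε` below the distal lower bound of `d(fⁿx, fⁿy)` gives
`x = y`. Such pseudo-orbits exist for every `y` in the component of `x`: points
closer than `δ / 3` are joined by jumping at a common return time, and pseudo-orbits joining
`a` to `b` and `b` to `c` concatenate. -/

section Iterates

variable {α : Type*} [TopologicalSpace α]

theorem hnpow_eq_pow (f : α ≃ₜ α) (n : ℕ) : hnpow f n = f ^ n := by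
  induction n with
  | zero => rfl
  | succ n ih => rw [pow_succ', ← ih]; rfl

theorem hpow_eq_zpow (f : α ≃ₜ α) (n : ℤ) : hpow f n = f ^ n := by
  cases n with
  | ofNat n => exact hnpow_eq_pow f n
  | negSucc n => rw [zpow_negSucc, ← inv_pow]; exact hnpow_eq_pow f.symm (n + 1)

theorem Homeomorph.coe_pow (f : α ≃ₜ α) (n : ℕ) : ⇑(f ^ n) = (⇑f)^[n] := by
  induction n with
  | zero => rfl
  | succ n ih => rw [pow_succ, Function.iterate_succ, ← ih]; rfl

theorem hpow_natCast_apply (f : α ≃ₜ α) (n : ℕ) (x : α) : hpow f n x = (⇑f)^[n] x := by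
  rw [← Homeomorph.coe_pow, ← hnpow_eq_pow]; rfl

theorem hpow_add_one_apply (f : α ≃ₜ α) (n : ℤ) (x : α) : hpow f (n + 1) x = f (hpow f n x) := by
  rw [hpow_eq_zpow, hpow_eq_zpow, add_comm, zpow_one_add]; rfl

end Iterates

section ForwardDistal

variable {Y : Type*} [MetricSpace Y] {T : Y → Y}

def IsForwardDistal (T : Y → Y) : Prop :=
  ∀ p q, p ≠ q → ∃ c > 0, ∀ m : ℕ, c ≤ dist (T^[m] p) (T^[m] q)

theorem IsForwardDistal.iterate (hT : IsForwardDistal T) (N : ℕ) : IsForwardDistal T^[N] := by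
  intro p q hpq
  obtain ⟨c, hc, hcm⟩ := hT p q hpq
  exact ⟨c, hc, fun m => by simpa only [← Function.iterate_mul] using hcm (N * m)⟩

theorem IsForwardDistal.mem_closure_iterate [CompactSpace Y] (hT : IsForwardDistal T)
    (hTc : Continuous T) (p : Y) : p ∈ closure {T^[m] p | m ≥ 1} := by
  -- `E` is the enveloping semigroup of `T`, with composition as product
  let _ : Semigroup (Y → Y) := inferInstanceAs (Semigroup (Function.End Y))
  set E : Set (Y → Y) := closure {T^[m] | m ≥ 1}
  have hE_comp_left : ∀ m, ∀ h ∈ E, T^[m] ∘ h ∈ E := by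
    intro m h hh
    refine map_mem_closure (continuous_pi fun y => (hTc.iterate m).comp (continuous_apply y)) hh ?_
    rintro _ ⟨m', hm', rfl⟩
    exact ⟨m + m', by omega, Function.iterate_add T m m'⟩
  have hE_mul : ∀ g ∈ E, ∀ h ∈ E, g * h ∈ E := by
    intro g hg h hh
    refine closure_minimal ?_ (isClosed_closure.preimage
      (continuous_pi fun y => continuous_apply (h y))) hg
    rintro _ ⟨m, -, rfl⟩
    exact hE_comp_left m h hh
  obtain ⟨e, heE, hee⟩ := exists_idempotent_in_compact_subsemigroup
    (fun r => continuous_pi fun y => continuous_apply (r y)) E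
    ⟨T, subset_closure ⟨1, le_rfl, rfl⟩⟩ isClosed_closure.isCompact hE_mul
  -- `e` identifies `q` with `e q`, whereas the elements of `E` keep distinct points apart
  have he_id : ∀ q, e q = q := by
    intro q
    by_contra hq
    obtain ⟨c, hc, hcm⟩ := hT q (e q) (Ne.symm hq)
    have hsep : E ⊆ {g | c ≤ dist (g q) (g (e q))} := by
      refine closure_minimal ?_ (isClosed_le continuous_const
        ((continuous_apply q).dist (continuous_apply (e q))))
      rintro _ ⟨m, -, rfl⟩
      exact hcm m
    have : c ≤ dist (e q) (e (e q)) := hsep heE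
    rw [show e (e q) = e q from congrFun hee q, dist_self] at this
    linarith
  have hp : e p ∈ closure {T^[m] p | m ≥ 1} :=
    map_mem_closure (f := fun g : Y → Y => g p) (continuous_apply p) heE
      (by rintro _ ⟨m, hm, rfl⟩; exact ⟨m, hm, rfl⟩)
  rwa [he_id] at hp

theorem IsForwardDistal.exists_iterate_dist_lt [CompactSpace Y] (hT : IsForwardDistal T)
    (hTc : Continuous T) (p : Y) {η : ℝ} (hη : 0 < η) (N : ℕ) :
    ∃ k ≥ N, dist (T^[k] p) p < η := by
  obtain ⟨_, ⟨m, hm, rfl⟩, hpm⟩ := Metric.mem_closure_iff.mp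
    ((hT.iterate (N + 1)).mem_closure_iterate (hTc.iterate (N + 1)) p) η hη
  refine ⟨(N + 1) * m, by nlinarith, ?_⟩
  rw [Function.iterate_mul, dist_comm]
  exact hpm

end ForwardDistal

section Distal

variable {f : X ≃ₜ X}

theorem Distal.isForwardDistal_prodMap (hf : Distal f) : IsForwardDistal (Prod.map f f) := by
  have hsep : ∀ {u v : X}, u ≠ v → ∃ c > 0, ∀ m : ℕ, c ≤ dist (f^[m] u) (f^[m] v) := by
    intro u v huv
    obtain ⟨c, hc, hcn⟩ := hf u v huv
    exact ⟨c, hc, fun m => by simpa only [hpow_natCast_apply] using hcn m⟩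
  rintro ⟨a, b⟩ ⟨a', b'⟩ hne
  simp only [Prod.map_iterate, Prod.dist_eq, Prod.map_apply]
  by_cases ha : a = a'
  · obtain ⟨c, hc, hcm⟩ := hsep (u := b) (v := b') fun hb => hne (by rw [ha, hb])
    exact ⟨c, hc, fun m => (hcm m).trans (le_max_right _ _)⟩
  · obtain ⟨c, hc, hcm⟩ := hsep ha
    exact ⟨c, hc, fun m => (hcm m).trans (le_max_left _ _)⟩

variable [CompactSpace X]

theorem Distal.exists_return_pair (hf : Distal f) (a b : X) {η : ℝ} (hη : 0 < η) (N : ℕ) :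
    ∃ k ≥ N, dist (hpow f k a) a < η ∧ dist (hpow f k b) b < η := by
  obtain ⟨k, hk, hd⟩ := hf.isForwardDistal_prodMap.exists_iterate_dist_lt
    (f.continuous.prodMap f.continuous) (a, b) hη N
  rw [Prod.map_iterate, Prod.dist_eq, max_lt_iff] at hd
  simp only [hpow_natCast_apply]
  exact ⟨k, hk, hd⟩

theorem Distal.dist_le_of_forall_ge_dist_hpow_le (hf : Distal f) {v y : X} {ε : ℝ} {T : ℕ}
    (h : ∀ n : ℕ, T ≤ n → dist (hpow f n v) (hpow f n y) ≤ ε) : dist v y ≤ ε := by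
  refine le_of_forall_pos_lt_add fun η hη => ?_
  obtain ⟨k, hk, hv, hy⟩ := hf.exists_return_pair v y (half_pos hη) T
  calc dist v y ≤ dist (hpow f k v) v + dist (hpow f k v) (hpow f k y) + dist (hpow f k y) y := by
        rw [dist_comm (hpow f k v) v]; exact dist_triangle4 _ _ _ _
    _ < η / 2 + ε + η / 2 := by linarith [h k hk]
    _ = ε + η := by ring

end Distal

section PseudoOrbits

variable {f : X ≃ₜ X} {δ : ℝ}

theorem IsPseudoOrbit.piecewise {ξ ξ' : ℤ → X} (hξ : IsPseudoOrbit f δ ξ)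
    (hξ' : IsPseudoOrbit f δ ξ') {T : ℤ} (hT : ξ T = ξ' T) :
    IsPseudoOrbit f δ fun n => if n ≤ T then ξ n else ξ' n := by
  intro n
  rcases lt_trichotomy n T with h | rfl | h
  · simp only [if_pos h.le, if_pos (show n + 1 ≤ T by omega)]
    exact hξ n
  · simp only [le_refl, if_true, if_neg (show ¬n + 1 ≤ n by omega), hT]
    exact hξ' n
  · simp only [if_neg (show ¬n ≤ T by omega), if_neg (show ¬n + 1 ≤ T by omega)]
    exact hξ' n

theorem isPseudoOrbit_switch_orbit {a b : X} {k : ℤ} (hk : dist (hpow f k a) (hpow f k b) ≤ δ) :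
    IsPseudoOrbit f δ fun n => if n < k then hpow f n a else hpow f n b := by
  have hδ : 0 ≤ δ := dist_nonneg.trans hk
  intro n
  dsimp only
  rcases lt_trichotomy (n + 1) k with h | h | h
  · rw [if_pos (show n < k by omega), if_pos h, ← hpow_add_one_apply, dist_self]
    exact hδ
  · rw [if_pos (show n < k by omega), if_neg (show ¬n + 1 < k by omega), ← hpow_add_one_apply, h]
    exact hk
  · rw [if_neg (show ¬n < k by omega), if_neg (show ¬n + 1 < k by omega), ← hpow_add_one_apply,
      dist_self]
    exact hδ

-- The switch from the orbit of `a` to that of `b` may be postponed arbitrarily: this makes the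
-- relation transitive.
def PseudoOrbitLinked (f : X ≃ₜ X) (δ : ℝ) (a b : X) : Prop :=
  ∀ N : ℕ, ∃ ξ : ℤ → X, IsPseudoOrbit f δ ξ ∧ (∀ n : ℤ, n ≤ N → ξ n = hpow f n a) ∧
    ∃ T : ℕ, ∀ n : ℤ, T ≤ n → ξ n = hpow f n b

theorem PseudoOrbitLinked.trans {a b c : X} (hab : PseudoOrbitLinked f δ a b)
    (hbc : PseudoOrbitLinked f δ b c) : PseudoOrbitLinked f δ a c := by
  intro N
  obtain ⟨ξ, hξ, hξa, T, hξb⟩ := hab N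
  set M := max N T
  have hNM : N ≤ M := le_max_left N T
  have hTM : T ≤ M := le_max_right N T
  obtain ⟨ξ', hξ', hξ'b, T', hξ'c⟩ := hbc M
  refine ⟨_, hξ.piecewise hξ' (T := M) ?_, fun n hn => ?_, T' + M + 1, fun n hn => ?_⟩
  · rw [hξb M (by exact_mod_cast hTM), hξ'b M le_rfl]
  · rw [if_pos (show n ≤ M by omega)]
    exact hξa n hn
  · rw [if_neg (show ¬n ≤ M by omega)]
    exact hξ'c n (by omega)

variable [CompactSpace X]

theorem Distal.pseudoOrbitLinked_of_dist_lt (hf : Distal f) {a b : X} (hab : dist a b < δ / 3) :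
    PseudoOrbitLinked f δ a b := by
  intro N
  obtain ⟨k, hk, ha, hb⟩ :=
    hf.exists_return_pair a b (dist_nonneg.trans_lt hab) (N + 1)
  have hkab : dist (hpow f k a) (hpow f k b) ≤ δ := by
    calc _ ≤ dist (hpow f k a) a + dist a b + dist (hpow f k b) b := by
          rw [dist_comm (hpow f k b) b]; exact dist_triangle4 _ _ _ _
      _ ≤ δ := by linarith
  exact ⟨_, isPseudoOrbit_switch_orbit hkab, fun n hn => if_pos (by omega), k,
    fun n hn => if_neg (by omega)⟩

theorem Distal.pseudoOrbitLinked_of_mem_connectedComponent (hf : Distal f) (hδ : 0 < δ)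
    {x y : X} (hy : y ∈ connectedComponent x) : PseudoOrbitLinked f δ x y := by
  refine isPreconnected_connectedComponent.induction₂' _ (fun z _ => ?_)
    (fun _ _ _ _ _ _ => PseudoOrbitLinked.trans) mem_connectedComponent hy
  filter_upwards [nhdsWithin_le_nhds (Metric.ball_mem_nhds z (by positivity : 0 < δ / 3))]
    with w hw
  exact ⟨hf.pseudoOrbitLinked_of_dist_lt (by rw [dist_comm]; exact hw),
    hf.pseudoOrbitLinked_of_dist_lt hw⟩

end PseudoOrbits

theorem stmt10 [CompactSpace X] (f : X ≃ₜ X) (h : Distal f) :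
    ∀ x : X, ShadowablePoint f x → connectedComponent x = {x} := by
  intro x hx
  refine Set.eq_singleton_iff_unique_mem.mpr ⟨mem_connectedComponent, fun y hy => ?_⟩
  by_contra hyx
  obtain ⟨c, hc, hcn⟩ := h x y (Ne.symm hyx)
  obtain ⟨δ, hδ, hshadow⟩ := hx (c / 3) (by positivity)
  obtain ⟨ξ, hξ, hξx, T, hξy⟩ := h.pseudoOrbitLinked_of_mem_connectedComponent hδ hy 0
  have hξ0 : ξ 0 = x := hξx 0 le_rfl
  obtain ⟨v, hv⟩ := hshadow ξ hξ hξ0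
  have hvx : dist v x ≤ c / 3 := hξ0 ▸ hv 0
  have hvy : dist v y ≤ c / 3 :=
    h.dist_le_of_forall_ge_dist_hpow_le fun n hn => hξy n (by exact_mod_cast hn) ▸ hv n
  have hxy : c ≤ dist x y := hcn 0
  linarith [dist_triangle_left x y v]
end

section
/- Let f be a homeomorphism of a compact metric space X and K ⊆ X compact. If every point of K is shadowable, then f has the POTP through K: for every ε>0 there is δ>0 such that every δ-pseudo-orbit ξ with ξ_0 ∈ K can be ε-shadowed. -/
open Metric Set

variable {X : Type*} [MetricSpace X]

/-! Shadowability of `x` gives a radius `r` such that every `r`-pseudo-orbit starting in the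
`r`-ball around `x` is shadowed: move its zeroth term to `x`, which by continuity of `f` at `x`
keeps it a pseudo-orbit, and shadow the result. Compactness of `K` makes `r` uniform. -/

open Filter Topology

lemma IsCompact.exists_pos_forall_of_forall_ball {Y : Type*} [PseudoMetricSpace Y] {K : Set Y}
    (hK : IsCompact K) {P : ℝ → Y → Prop} (hP : ∀ z, Antitone (P · z))
    (hloc : ∀ x ∈ K, ∃ r > 0, ∀ z ∈ ball x r, P r z) :
    ∃ δ > 0, ∀ z ∈ K, P δ z := by
  have hnhds : ∀ x ∈ K, ∀ᶠ p : ℝ × Y in 𝓝 (0, x), P p.1 p.2 := by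
    intro x hx
    obtain ⟨r, hr, hPr⟩ := hloc x hx
    filter_upwards [prod_mem_nhds (ball_mem_nhds 0 hr) (ball_mem_nhds x hr)] with p hp
    have hp₁ : p.1 ≤ r := (le_abs_self _).trans (by simpa using (mem_ball.mp hp.1).le)
    exact hP p.2 hp₁ (hPr p.2 hp.2)
  obtain ⟨ρ, hρ, hPρ⟩ := Metric.eventually_nhds_iff.mp (hK.eventually_forall_of_forall_eventually hnhds)
  exact ⟨ρ / 2, half_pos hρ, hPρ (by rw [Real.dist_0_eq_abs, abs_of_pos (half_pos hρ)]; linarith)⟩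

variable {f : X ≃ₜ X}

lemma IsPseudoOrbit.mono {δ δ' : ℝ} {ξ : ℤ → X} (hξ : IsPseudoOrbit f δ ξ) (hδ : δ ≤ δ') :
    IsPseudoOrbit f δ' ξ :=
  fun n => (hξ n).trans hδ

lemma IsPseudoOrbit.update_zero {δ η : ℝ} {ξ : ℤ → X} {x : X} (hξ : IsPseudoOrbit f δ ξ)
    (hfx : dist (f x) (f (ξ 0)) ≤ η) (hx : dist (ξ 0) x ≤ η) :
    IsPseudoOrbit f (δ + η) (Function.update ξ 0 x) := by
  have hη : 0 ≤ η := dist_nonneg.trans hx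
  intro n
  rcases eq_or_ne n 0 with rfl | hn
  · simp only [Function.update_self, zero_add, Function.update_of_ne one_ne_zero]
    calc dist (f x) (ξ 1) ≤ dist (f x) (f (ξ 0)) + dist (f (ξ 0)) (ξ 1) := dist_triangle _ _ _
      _ ≤ η + δ := add_le_add hfx (by simpa using hξ 0)
      _ = δ + η := add_comm η δ
  rcases eq_or_ne n (-1) with rfl | hn'
  · simp only [Function.update_of_ne hn, neg_add_cancel, Function.update_self]
    calc dist (f (ξ (-1))) x ≤ dist (f (ξ (-1))) (ξ 0) + dist (ξ 0) x := dist_triangle _ _ _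
      _ ≤ δ + η := add_le_add (by simpa using hξ (-1)) hx
  · have hn₁ : n + 1 ≠ 0 := fun h => hn' (by omega)
    simp only [Function.update_of_ne hn, Function.update_of_ne hn₁]
    linarith [hξ n]

lemma ShadowedBy.of_update_zero {ε η : ℝ} {y x : X} {ξ : ℤ → X}
    (hy : ShadowedBy f ε y (Function.update ξ 0 x)) (hx : dist x (ξ 0) ≤ η) :
    ShadowedBy f (ε + η) y ξ := by
  have hη : 0 ≤ η := dist_nonneg.trans hx
  intro n
  rcases eq_or_ne n 0 with rfl | hn
  · have h0 := hy 0
    rw [Function.update_self] at h0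
    linarith [dist_triangle (hpow f 0 y) x (ξ 0)]
  · have hn' := hy n
    rw [Function.update_of_ne hn] at hn'
    linarith

lemma ShadowablePoint.exists_shadowing_near {x : X} (hx : ShadowablePoint f x) {ε : ℝ}
    (hε : 0 < ε) : ∃ r > 0, ∀ z ∈ ball x r, ∀ ξ : ℤ → X, IsPseudoOrbit f r ξ → ξ 0 = z →
      ∃ y, ShadowedBy f ε y ξ := by
  obtain ⟨D, hD, hDsh⟩ := hx (ε / 2) (half_pos hε)
  obtain ⟨u, hu, hfu⟩ := Metric.continuousAt_iff.mp f.continuous.continuousAt (D / 2) (half_pos hD)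
  obtain ⟨r, hr, hru, hrD, hrε⟩ : ∃ r > 0, r ≤ u ∧ r ≤ D / 2 ∧ r ≤ ε / 2 :=
    ⟨min (min u (D / 2)) (ε / 2), by positivity, by simp⟩
  refine ⟨r, hr, fun z hz ξ hξ hξz => ?_⟩
  subst hξz
  have hz' : dist (ξ 0) x < r := mem_ball.mp hz
  have hfz : dist (f x) (f (ξ 0)) ≤ D / 2 := by
    rw [dist_comm]
    exact (hfu (hz'.trans_le hru)).le
  obtain ⟨y, hy⟩ := hDsh _ ((hξ.update_zero hfz (by linarith)).mono (by linarith))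
    (Function.update_self ..)
  exact ⟨y, add_halves ε ▸ hy.of_update_zero (by rw [dist_comm]; linarith)⟩

theorem stmt16_general (f : X ≃ₜ X) (K : Set X) (hK : IsCompact K)
    (h : ∀ x ∈ K, ShadowablePoint f x) :
    ∀ ε > 0, ∃ δ > 0, ∀ ξ : ℤ → X, IsPseudoOrbit f δ ξ → ξ 0 ∈ K →
      ∃ y, ShadowedBy f ε y ξ := by
  intro ε hε
  obtain ⟨δ, hδ, hδK⟩ := hK.exists_pos_forall_of_forall_ball
    (P := fun δ z => ∀ ξ : ℤ → X, IsPseudoOrbit f δ ξ → ξ 0 = z → ∃ y, ShadowedBy f ε y ξ)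
    (fun _ _ _ hδ H ξ hξ => H ξ (hξ.mono hδ))
    (fun x hx => (h x hx).exists_shadowing_near hε)
  exact ⟨δ, hδ, fun ξ hξ hξK => hδK _ hξK ξ hξ rfl⟩

theorem stmt16 [CompactSpace X] (f : X ≃ₜ X) (K : Set X) (hK : IsCompact K)
    (h : ∀ x ∈ K, ShadowablePoint f x) :
    ∀ ε > 0, ∃ δ > 0, ∀ ξ : ℤ → X, IsPseudoOrbit f δ ξ → ξ 0 ∈ K →
      ∃ y, ShadowedBy f ε y ξ :=
  stmt16_general f K hK h
end
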